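/- Let A be a C*-algebra, H₁ and H₂ Hilbert A-modules, and s ∈ L(H₁, H₂) an adjointable bounded module map which is surjective. Then there exists an adjointable module map ψ ∈ L(H₂, H₁) with s ∘ ψ = id_{H₂}; moreover ψ(H₂) is an orthogonal direct summand of H₁ and is unitarily equivalent to H₂. Consequently every Hilbert A-module is projective in the category of Hilbert A-modules with adjointable maps as morphisms. -/

import Mathlib

open scoped RightActions

noncomputable section

/-- The December 2024 Mathlib `CStarModule` (right Hilbert `A`-module, action by `Aᵐᵒᵖ`),
restated verbatim since Mathlib's `CStarModule` now uses left modules. -/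
class RightCStarModule (A E : Type*) [NonUnitalSemiring A] [StarRing A] [Module ℂ A]
    [AddCommGroup E] [Module ℂ E] [PartialOrder A] [SMul Aᵐᵒᵖ E] [Norm A] [Norm E]
    extends Inner A E where
  inner_add_right {x} {y} {z} : inner x (y + z) = inner x y + inner x z
  inner_self_nonneg {x} : 0 ≤ inner x x
  inner_self {x} : inner x x = 0 ↔ x = 0
  inner_op_smul_right {a : A} {x y : E} : inner x (y <• a) = inner x y * a
  inner_smul_right_complex {z : ℂ} {x} {y} : inner x (z • y) = z • inner x y
  star_inner x y : star (inner x y) = inner y x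
  norm_eq_sqrt_norm_inner_self x : ‖x‖ = √‖inner x x‖

/-- A bounded `A`-module map between Hilbert `A`-modules. -/
def IsModuleMap (A : Type*) {E F : Type*} [NonUnitalCStarAlgebra A]
    [NormedAddCommGroup E] [Module ℂ E] [SMul Aᵐᵒᵖ E]
    [NormedAddCommGroup F] [Module ℂ F] [SMul Aᵐᵒᵖ F] (T : E →L[ℂ] F) : Prop :=
  ∀ (x : E) (a : A), T (x <• a) = T x <• a

/-- `S : E → F` and `S' : F → E` are mutually adjoint module maps:
`⟪S x, y⟫ = ⟪x, S' y⟫` for all `x, y`. -/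
def IsAdjointPair (A : Type*) {E F : Type*} [NonUnitalCStarAlgebra A] [PartialOrder A]
    [StarOrderedRing A]
    [NormedAddCommGroup E] [NormedSpace ℂ E] [SMul Aᵐᵒᵖ E] [RightCStarModule A E]
    [NormedAddCommGroup F] [NormedSpace ℂ F] [SMul Aᵐᵒᵖ F] [RightCStarModule A F]
    (S : E →L[ℂ] F) (S' : F →L[ℂ] E) : Prop :=
  ∀ (x : E) (y : F), inner A (S x) y = inner A x (S' y)

/-!
Since `s` is surjective, the open mapping theorem makes its adjoint `s'` bounded below, so
`c = s s'` is a positive module map with `m ‖x‖² ≤ ‖⟪c x, x⟫‖`. Estimating `⟪(λ - c) x, x⟫` shows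
that `λ - c` is bounded below for every `λ ∉ [m, ∞)`. A point of the spectrum at which `λ - c` is
bounded below by `d` has the whole disc of radius `d / 2` around it in the spectrum, so by
compactness the spectrum of `c` lies in `[m, ‖c‖]`. Hence, with `M = ‖c‖ + m`, the binomial series
of `(1 + y) ^ (1/2)` at `y = c / M - 1` converges and gives an invertible self-adjoint module map
`q` with `q² = c`. With `r = q⁻¹`, the map `U = s' r` satisfies `U* U = r c r = 1`, `ψ = U r` is a
right inverse of `s`, and `ψ s = U U*` is the orthogonal projection onto `ψ(H₂) = U(H₂)`. Lifting
`φ` through `s` is then `ψ φ`.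
-/

open Filter
open scoped NNReal ENNReal

namespace RightCStarModule

section Algebraic

variable {A E : Type*} [NonUnitalRing A] [StarRing A] [Module ℂ A]
  [AddCommGroup E] [Module ℂ E] [PartialOrder A] [SMul Aᵐᵒᵖ E] [Norm A] [Norm E]
  [RightCStarModule A E]

attribute [simp] inner_add_right star_inner inner_op_smul_right inner_smul_right_complex

@[simp]
lemma inner_op_smul_left {a : A} {x y : E} : inner A (x <• a) y = star a * inner A x y := by
  rw [← star_inner]; simp

variable [StarModule ℂ A] in
@[simp]
lemma inner_smul_left_complex {z : ℂ} {x y : E} : inner A (z • x) y = star z • inner A x y := by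
  rw [← star_inner]; simp

@[simp]
lemma inner_neg_right {x y : E} : inner A x (-y) = -inner A x y := by
  simpa using inner_smul_right_complex (A := A) (z := -1) (x := x) (y := y)

@[simp]
lemma inner_sub_right {x y z : E} : inner A x (y - z) = inner A x y - inner A x z := by
  rw [sub_eq_add_neg, inner_add_right, inner_neg_right, ← sub_eq_add_neg]

@[simp]
lemma inner_sub_left {x y z : E} : inner A (x - y) z = inner A x z - inner A y z := by
  rw [← star_inner, inner_sub_right, star_sub, star_inner, star_inner]

lemma ext_inner_right {u v : E} (h : ∀ w : E, inner A w u = inner A w v) : u = v := by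
  rw [← sub_eq_zero, ← inner_self (A := A), inner_sub_right, h, sub_self]

variable (A) in
lemma add_op_smul (a : A) (u v : E) : (u + v) <• a = u <• a + v <• a :=
  ext_inner_right (A := A) fun w ↦ by simp [add_mul]

variable (A) in
lemma sub_op_smul (a : A) (u v : E) : (u - v) <• a = u <• a - v <• a :=
  ext_inner_right (A := A) fun w ↦ by simp [sub_mul]

variable (A) [IsScalarTower ℂ A A] in
lemma smul_op_smul_comm (z : ℂ) (a : A) (u : E) : (z • u) <• a = z • (u <• a) :=
  ext_inner_right (A := A) fun w ↦ by
    simp only [inner_op_smul_right, inner_smul_right_complex, smul_mul_assoc]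

end Algebraic

section Norm

variable {A E : Type*} [NonUnitalCStarAlgebra A] [PartialOrder A]
  [AddCommGroup E] [Module ℂ E] [SMul Aᵐᵒᵖ E] [Norm E] [RightCStarModule A E]

variable (A) in
lemma norm_sq_eq (x : E) : ‖x‖ ^ 2 = ‖inner A x x‖ := by
  rw [norm_eq_sqrt_norm_inner_self (A := A), Real.sq_sqrt (norm_nonneg _)]

variable [StarOrderedRing A]

/-- A right Hilbert `A`-module is a Hilbert `Aᵐᵒᵖ`-module in Mathlib's (left) sense. -/
abbrev toCStarModuleMulOpposite : CStarModule Aᵐᵒᵖ E where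
  inner x y := MulOpposite.op (inner A x y)
  inner_add_right := by simp
  inner_self_nonneg := MulOpposite.op_nonneg.mpr inner_self_nonneg
  inner_self := by simp [inner_self]
  inner_op_smul_right {a x y} := by
    change MulOpposite.op (inner A x (y <• a.unop)) = _
    rw [inner_op_smul_right]
    rfl
  inner_smul_right_complex {z x y} := by rw [inner_smul_right_complex, MulOpposite.op_smul]
  star_inner x y := by rw [← MulOpposite.op_star, star_inner]
  norm_eq_sqrt_norm_inner_self x := by
    rw [MulOpposite.norm_op, norm_eq_sqrt_norm_inner_self (A := A)]

lemma norm_inner_le (x y : E) : ‖inner A x y‖ ≤ ‖x‖ * ‖y‖ :=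
  let _ := toCStarModuleMulOpposite (A := A) (E := E)
  CStarModule.norm_inner_le (A := Aᵐᵒᵖ) E

end Norm

section ContinuousLinearMaps

variable (A : Type*) {E : Type*} [NonUnitalCStarAlgebra A] [PartialOrder A]
  [NormedAddCommGroup E] [NormedSpace ℂ E] [SMul Aᵐᵒᵖ E] [RightCStarModule A E]

lemma norm_op_smul_le (a : A) (u : E) : ‖u <• a‖ ≤ ‖a‖ * ‖u‖ := by
  refine le_of_pow_le_pow_left₀ two_ne_zero (by positivity) ?_
  calc ‖u <• a‖ ^ 2 = ‖star a * inner A u u * a‖ := by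
        rw [norm_sq_eq A, inner_op_smul_left, inner_op_smul_right, mul_assoc]
    _ ≤ ‖a‖ * ‖inner A u u‖ * ‖a‖ := by
        refine (norm_mul_le _ _).trans ?_
        gcongr
        exact (norm_mul_le _ _).trans_eq (by rw [norm_star])
    _ = (‖a‖ * ‖u‖) ^ 2 := by rw [← norm_sq_eq A]; ring

def opSMulCLM (a : A) : E →L[ℂ] E :=
  LinearMap.mkContinuous
    { toFun u := u <• a
      map_add' := add_op_smul A a
      map_smul' z u := smul_op_smul_comm A z a u } ‖a‖ (norm_op_smul_le A a)

variable [StarOrderedRing A] in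
def innerCLM (x : E) : E →L[ℂ] A :=
  LinearMap.mkContinuous
    { toFun y := inner A x y
      map_add' _ _ := inner_add_right
      map_smul' _ _ := inner_smul_right_complex } ‖x‖ (norm_inner_le x)

end ContinuousLinearMaps

end RightCStarModule

open RightCStarModule

lemma ContinuousLinearMap.units_inv_apply_apply {E : Type*} [NormedAddCommGroup E]
    [NormedSpace ℂ E] (u : (E →L[ℂ] E)ˣ) (x : E) :
    (↑u⁻¹ : E →L[ℂ] E) ((u : E →L[ℂ] E) x) = x := by
  rw [← mul_apply_eq_comp, u.inv_mul, one_apply_eq_self]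

lemma ContinuousLinearMap.units_apply_inv_apply {E : Type*} [NormedAddCommGroup E]
    [NormedSpace ℂ E] (u : (E →L[ℂ] E)ˣ) (x : E) :
    (u : E →L[ℂ] E) ((↑u⁻¹ : E →L[ℂ] E) x) = x := by
  rw [← mul_apply_eq_comp, u.mul_inv, one_apply_eq_self]

namespace IsModuleMap

variable {A : Type*} [NonUnitalCStarAlgebra A] {E F G : Type*}
  [NormedAddCommGroup E] [NormedSpace ℂ E] [SMul Aᵐᵒᵖ E]
  [NormedAddCommGroup F] [NormedSpace ℂ F] [SMul Aᵐᵒᵖ F]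
  [NormedAddCommGroup G] [NormedSpace ℂ G] [SMul Aᵐᵒᵖ G]

lemma comp {T : F →L[ℂ] G} {S : E →L[ℂ] F} (hT : IsModuleMap A T) (hS : IsModuleMap A S) :
    IsModuleMap A (T.comp S) := fun x a ↦ by
  rw [ContinuousLinearMap.comp_apply, hS, hT, ContinuousLinearMap.comp_apply]

lemma mul {T S : E →L[ℂ] E} (hT : IsModuleMap A T) (hS : IsModuleMap A S) :
    IsModuleMap A (T * S) :=
  hT.comp hS

lemma one : IsModuleMap A (1 : E →L[ℂ] E) := fun _ _ ↦ rfl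

lemma pow {T : E →L[ℂ] E} (hT : IsModuleMap A T) (n : ℕ) : IsModuleMap A (T ^ n) := by
  induction n with
  | zero => exact one
  | succ n ih => rw [pow_succ]; exact ih.mul hT

lemma inv (u : (E →L[ℂ] E)ˣ) (hu : IsModuleMap A (u : E →L[ℂ] E)) :
    IsModuleMap A (↑u⁻¹ : E →L[ℂ] E) := fun x a ↦ by
  conv_lhs => rw [← ContinuousLinearMap.units_apply_inv_apply u x, ← hu,
    ContinuousLinearMap.units_inv_apply_apply]

variable [PartialOrder A] [RightCStarModule A F]

lemma smul {T : E →L[ℂ] F} (hT : IsModuleMap A T) (z : ℂ) : IsModuleMap A (z • T) :=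
  fun x a ↦ by simp only [smul_apply, hT x a, smul_op_smul_comm]

lemma sub {T S : E →L[ℂ] F} (hT : IsModuleMap A T) (hS : IsModuleMap A S) :
    IsModuleMap A (T - S) :=
  fun x a ↦ by simp only [sub_apply, hT x a, hS x a, sub_op_smul]

lemma hasSum {ι : Type*} {T : ι → E →L[ℂ] F} {S : E →L[ℂ] F} (hTS : HasSum T S)
    (hT : ∀ i, IsModuleMap A (T i)) : IsModuleMap A S := fun x a ↦ by
  have h₁ := hTS.mapL (ContinuousLinearMap.apply ℂ F (x <• a))
  have h₂ := (hTS.mapL (ContinuousLinearMap.apply ℂ F x)).mapL (opSMulCLM A a)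
  simp only [ContinuousLinearMap.apply_apply, hT _ x a] at h₁
  exact h₁.unique h₂

end IsModuleMap

namespace IsAdjointPair

variable {A : Type*} [NonUnitalCStarAlgebra A] [PartialOrder A] [StarOrderedRing A]
  {E F G : Type*}
  [NormedAddCommGroup E] [NormedSpace ℂ E] [SMul Aᵐᵒᵖ E] [RightCStarModule A E]
  [NormedAddCommGroup F] [NormedSpace ℂ F] [SMul Aᵐᵒᵖ F] [RightCStarModule A F]
  [NormedAddCommGroup G] [NormedSpace ℂ G] [SMul Aᵐᵒᵖ G] [RightCStarModule A G]

lemma symm {S : E →L[ℂ] F} {S' : F →L[ℂ] E} (h : IsAdjointPair A S S') :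
    IsAdjointPair A S' S := fun y x ↦ by
  rw [← star_inner, ← h, star_inner]

lemma comp {S : E →L[ℂ] F} {S' : F →L[ℂ] E} {T : F →L[ℂ] G} {T' : G →L[ℂ] F}
    (hS : IsAdjointPair A S S') (hT : IsAdjointPair A T T') :
    IsAdjointPair A (T.comp S) (S'.comp T') :=
  fun _ _ ↦ (hT _ _).trans (hS _ _)

lemma mul {S S' T T' : E →L[ℂ] E} (hT : IsAdjointPair A T T') (hS : IsAdjointPair A S S') :
    IsAdjointPair A (T * S) (S' * T') :=
  hS.comp hT

lemma one : IsAdjointPair A (1 : E →L[ℂ] E) 1 := fun _ _ ↦ rfl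

lemma pow {T T' : E →L[ℂ] E} (h : IsAdjointPair A T T') (n : ℕ) :
    IsAdjointPair A (T ^ n) (T' ^ n) := by
  induction n with
  | zero => exact one
  | succ n ih => rw [pow_succ, pow_succ']; exact ih.mul h

lemma smul {S : E →L[ℂ] F} {S' : F →L[ℂ] E} (h : IsAdjointPair A S S') (z : ℂ) :
    IsAdjointPair A (z • S) (star z • S') := fun x y ↦ by
  simp only [smul_apply, inner_smul_left_complex, inner_smul_right_complex, h x y]

lemma sub {S T : E →L[ℂ] F} {S' T' : F →L[ℂ] E} (hS : IsAdjointPair A S S')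
    (hT : IsAdjointPair A T T') : IsAdjointPair A (S - T) (S' - T') := fun x y ↦ by
  simp only [sub_apply, RightCStarModule.inner_sub_left, RightCStarModule.inner_sub_right,
    hS x y, hT x y]

lemma hasSum {ι : Type*} {S : ι → E →L[ℂ] F} {S' : ι → F →L[ℂ] E} {s : E →L[ℂ] F}
    {s' : F →L[ℂ] E} (hS : HasSum S s) (hS' : HasSum S' s')
    (h : ∀ i, IsAdjointPair A (S i) (S' i)) : IsAdjointPair A s s' := fun x y ↦ by
  have h₁ := ((hS.mapL (ContinuousLinearMap.apply ℂ F x)).mapL (innerCLM A y)).star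
  have h₂ := (hS'.mapL (ContinuousLinearMap.apply ℂ E y)).mapL (innerCLM A x)
  simp only [innerCLM, LinearMap.mkContinuous_apply, LinearMap.coe_mk, AddHom.coe_mk,
    ContinuousLinearMap.apply_apply, star_inner, h _ x y] at h₁ h₂
  exact h₁.unique h₂

lemma inv (u : (E →L[ℂ] E)ˣ) (v : (E →L[ℂ] E)ˣ) (h : IsAdjointPair A (u : E →L[ℂ] E) v) :
    IsAdjointPair A (↑u⁻¹ : E →L[ℂ] E) ↑v⁻¹ := fun x y ↦ by
  conv_lhs => rw [← ContinuousLinearMap.units_apply_inv_apply v y, ← h,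
    ContinuousLinearMap.units_apply_inv_apply]

lemma inner_map_map_of_leftInverse {U : E →L[ℂ] F} {U' : F →L[ℂ] E} (h : IsAdjointPair A U U')
    (hU : Function.LeftInverse U' U) (x y : E) : inner A (U x) (U y) = inner A x y := by
  rw [h, hU]

lemma exists_norm_le_mul_norm_of_surjective [CompleteSpace E] [CompleteSpace F]
    {s : E →L[ℂ] F} {s' : F →L[ℂ] E} (hadj : IsAdjointPair A s s')
    (hsurj : Function.Surjective s) : ∃ C > 0, ∀ y, ‖y‖ ≤ C * ‖s' y‖ := by
  obtain ⟨C, hC, hpre⟩ := s.exists_preimage_norm_le hsurj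
  refine ⟨C, hC, fun y ↦ ?_⟩
  obtain ⟨x, rfl, hx⟩ := hpre y
  rcases (norm_nonneg (s x)).eq_or_lt with h | h
  · rw [← h]; positivity
  refine le_of_mul_le_mul_right ?_ h
  calc ‖s x‖ * ‖s x‖ = ‖inner A x (s' (s x))‖ := by rw [← hadj, ← sq, norm_sq_eq A]
    _ ≤ ‖x‖ * ‖s' (s x)‖ := norm_inner_le _ _
    _ ≤ C * ‖s' (s x)‖ * ‖s x‖ := by
        rw [mul_right_comm]; gcongr

end IsAdjointPair

section BanachAlgebra

variable {B : Type*} [NormedRing B] [NormedAlgebra ℂ B] [CompleteSpace B]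

lemma eventually_norm_pow_le_of_spectralRadius_lt {y : B} {r : ℝ≥0}
    (h : spectralRadius ℂ y < r) : ∀ᶠ n in atTop, ‖y ^ n‖ ≤ r ^ n := by
  filter_upwards
    [(spectrum.pow_nnnorm_pow_one_div_tendsto_nhds_spectralRadius y).eventually_lt_const h,
      eventually_ne_atTop 0] with n hn hn0
  rw [← ENNReal.coe_rpow_of_nonneg _ (by positivity), ENNReal.coe_lt_coe, one_div] at hn
  have := pow_le_pow_left₀ (by positivity) hn.le n
  rw [NNReal.rpow_inv_natCast_pow _ hn0] at this
  exact_mod_cast this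

/-- The binomial series of `(1 + y) ^ (1/2)`; it converges when `spectralRadius ℂ y < 1`. -/
def sqrtOneAdd (y : B) : B := ∑' n, Ring.choose (2⁻¹ : ℂ) n • y ^ n

lemma summable_norm_sqrtOneAdd {y : B} (hy : spectralRadius ℂ y < 1) :
    Summable fun n ↦ ‖Ring.choose (2⁻¹ : ℂ) n • y ^ n‖ := by
  obtain ⟨r, hyr, hr1⟩ := ENNReal.lt_iff_exists_nnreal_btwn.mp hy
  have hcoeff : Summable fun n ↦ ‖Ring.choose (2⁻¹ : ℂ) n‖ * (r : ℝ) ^ n := by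
    simpa [binomialSeries, FormalMultilinearSeries.ofScalars_norm] using
      (binomialSeries ℂ (2⁻¹ : ℂ)).summable_norm_mul_pow
        (hr1.trans_le binomialSeries_radius_ge_one)
  refine Summable.of_norm_bounded_eventually_nat hcoeff ?_
  filter_upwards [eventually_norm_pow_le_of_spectralRadius_lt hyr] with n hn
  rw [norm_norm, norm_smul]
  gcongr

open Finset in
lemma sum_antidiagonal_choose_half_mul (n : ℕ) :
    ∑ ij ∈ antidiagonal n, Ring.choose (2⁻¹ : ℂ) ij.1 * Ring.choose (2⁻¹ : ℂ) ij.2 =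
      Nat.choose 1 n := by
  rw [← Ring.add_choose_eq n (Commute.all _ _), ← Ring.choose_natCast]
  norm_num

open Finset in
lemma sqrtOneAdd_mul_self {y : B} (hy : spectralRadius ℂ y < 1) :
    sqrtOneAdd y * sqrtOneAdd y = 1 + y := by
  have hs := summable_norm_sqrtOneAdd hy
  calc sqrtOneAdd y * sqrtOneAdd y = ∑' n, (Nat.choose 1 n : ℂ) • y ^ n := by
        rw [sqrtOneAdd, tsum_mul_tsum_eq_tsum_sum_antidiagonal_of_summable_norm hs hs]
        refine tsum_congr fun n ↦ ?_
        rw [← sum_antidiagonal_choose_half_mul, sum_smul]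
        refine sum_congr rfl fun ij hij ↦ ?_
        rw [smul_mul_smul_comm, ← pow_add, mem_antidiagonal.mp hij]
    _ = ∑ n ∈ range 2, (Nat.choose 1 n : ℂ) • y ^ n :=
        tsum_eq_sum fun n hn ↦ by
          simp [Nat.choose_eq_zero_of_lt (by simpa using hn : 1 < n)]
    _ = 1 + y := by simp [sum_range_succ]

end BanachAlgebra

lemma IsCompact.forall_nonpos_of_forall_exists_lt {X : Type*} [TopologicalSpace X] {K : Set X}
    (hK : IsCompact K) {f : X → ℝ} (hf : Continuous f)
    (h : ∀ z ∈ K, 0 < f z → ∃ w ∈ K, f z < f w) : ∀ z ∈ K, f z ≤ 0 := by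
  intro z hz
  by_contra! hpos
  obtain ⟨z₀, hz₀, hmax⟩ := hK.exists_isMaxOn ⟨z, hz⟩ hf.continuousOn
  obtain ⟨w, hw, hlt⟩ := h z₀ hz₀ (hpos.trans_le (hmax hz))
  exact (hmax hw).not_gt hlt

namespace ContinuousLinearMap

variable {F : Type*} [NormedAddCommGroup F] [NormedSpace ℂ F] [CompleteSpace F]

local notation "↑ₐ" => algebraMap ℂ (F →L[ℂ] F)

lemma mem_spectrum_of_norm_sub_lt {T : F →L[ℂ] F} {l μ : ℂ} {d : ℝ} (hl : l ∈ spectrum ℂ T)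
    (hbd : ∀ x, d * ‖x‖ ≤ ‖(↑ₐ l - T) x‖) (hμ : ‖μ - l‖ < d / 2) : μ ∈ spectrum ℂ T := by
  by_contra hμT
  obtain ⟨u, hu⟩ := spectrum.notMem_iff.mp hμT
  have hd : 0 < d := by linarith [norm_nonneg (μ - l)]
  have hu_below : ∀ x, d / 2 * ‖x‖ ≤ ‖(u : F →L[ℂ] F) x‖ := fun x ↦ by
    have hx : (↑ₐ l - T) x = (u : F →L[ℂ] F) x - (μ - l) • x := by
      rw [hu]; simp [Algebra.algebraMap_eq_smul_one, sub_smul]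
    have := (hbd x).trans (hx ▸ norm_sub_le _ _)
    rw [norm_smul] at this
    nlinarith [norm_nonneg x]
  have hinv : ‖(↑u⁻¹ : F →L[ℂ] F)‖ ≤ 2 / d :=
    opNorm_le_bound _ (by positivity) fun y ↦ by
      have := hu_below ((↑u⁻¹ : F →L[ℂ] F) y)
      rw [units_apply_inv_apply] at this
      rw [div_mul_eq_mul_div, le_div_iff₀ hd]
      linarith
  have hsmall : ‖(↑u⁻¹ : F →L[ℂ] F) * ↑ₐ (μ - l)‖ < 1 :=
    calc _ ≤ ‖(↑u⁻¹ : F →L[ℂ] F)‖ * (‖μ - l‖ * ‖(1 : F →L[ℂ] F)‖) :=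
          (norm_mul_le _ _).trans_eq (by rw [norm_algebraMap])
      _ ≤ 2 / d * (‖μ - l‖ * 1) := by gcongr; exact norm_id_le
      _ < 2 / d * (d / 2) := by rw [mul_one]; gcongr
      _ = 1 := by field_simp
  have hfactor : ↑ₐ l - T = u * (1 - ↑u⁻¹ * ↑ₐ (μ - l)) := by
    rw [mul_sub, mul_one, ← mul_assoc, u.mul_inv, one_mul, hu, map_sub]
    abel
  exact spectrum.mem_iff.mp hl (hfactor ▸ u.isUnit.mul (Units.oneSub _ hsmall).isUnit)

lemma im_eq_zero_of_mem_spectrum {T : F →L[ℂ] F}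
    (hbd : ∀ (l : ℂ) (x : F), |l.im| * ‖x‖ ≤ ‖(↑ₐ l - T) x‖) {l : ℂ} (hl : l ∈ spectrum ℂ T) :
    l.im = 0 := by
  refine abs_nonpos_iff.mp <| (spectrum.isCompact T).forall_nonpos_of_forall_exists_lt
    (f := fun z ↦ |z.im|) (by fun_prop) (fun z hz hpos ↦ ?_) l hl
  refine ⟨z + (z.im / 3 : ℝ) * Complex.I, mem_spectrum_of_norm_sub_lt hz (hbd z) ?_, ?_⟩
  · simp only [add_sub_cancel_left, norm_mul, Complex.norm_real, Complex.norm_I, mul_one,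
      Real.norm_eq_abs, abs_div, abs_of_pos (by norm_num : (0 : ℝ) < 3)]
    linarith
  · simp only [Complex.add_im, Complex.mul_im, Complex.ofReal_re, Complex.ofReal_im,
      Complex.I_re, Complex.I_im, mul_zero, mul_one, add_zero]
    rw [show z.im + z.im / 3 = (4 / 3) * z.im by ring, abs_mul,
      abs_of_pos (by norm_num : (0 : ℝ) < 4 / 3)]
    linarith

lemma le_re_of_mem_spectrum {T : F →L[ℂ] F} {m : ℝ}
    (hreal : ∀ l ∈ spectrum ℂ T, l.im = 0)
    (hbd : ∀ t : ℝ, t < m → ∃ d > 0, ∀ x, d * ‖x‖ ≤ ‖(↑ₐ t - T) x‖) {l : ℂ}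
    (hl : l ∈ spectrum ℂ T) : m ≤ l.re := by
  refine sub_nonpos.mp <| (spectrum.isCompact T).forall_nonpos_of_forall_exists_lt
    (f := fun z ↦ m - z.re) (by fun_prop) (fun z hz hpos ↦ ?_) l hl
  obtain ⟨d, hd, hzd⟩ := hbd z.re (by linarith)
  have hz_real : (z.re : ℂ) = z := Complex.ext rfl (hreal z hz).symm
  refine ⟨z - (d / 3 : ℝ), mem_spectrum_of_norm_sub_lt hz (hz_real ▸ hzd) ?_, ?_⟩
  · rw [sub_sub_cancel_left, norm_neg, Complex.norm_real, Real.norm_of_nonneg (by positivity)]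
    linarith
  · simp only [Complex.sub_re, Complex.ofReal_re]
    linarith

lemma spectralRadius_smul_sub_one_lt_one {T : F →L[ℂ] F} {m : ℝ} (hm : 0 < m)
    (hT : spectrum ℂ T ⊆ {l | l.im = 0 ∧ m ≤ l.re}) :
    spectralRadius ℂ ((((‖T‖ + m)⁻¹ : ℝ) : ℂ) • T - 1) < 1 := by
  set M := ‖T‖ + m
  have hM : 0 < M := by positivity
  have hbound : ∀ μ ∈ spectrum ℂ ((((M⁻¹ : ℝ) : ℂ)) • T - 1), ‖μ‖ ≤ 1 - m / M := by
    intro μ hμ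
    have hM' : ((M⁻¹ : ℝ) : ℂ) ≠ 0 := by exact_mod_cast (inv_pos.mpr hM).ne'
    rw [← map_one (algebraMap ℂ (F →L[ℂ] F)), ← spectrum.sub_singleton_eq,
      show ((M⁻¹ : ℝ) : ℂ) • T = (Units.mk0 _ hM') • T from rfl,
      spectrum.unit_smul_eq_smul] at hμ
    obtain ⟨_, ⟨l, hl, rfl⟩, _, rfl, rfl⟩ := hμ
    obtain ⟨him, hre⟩ := hT hl
    have hlT : l.re ≤ ‖T‖ :=
      calc l.re ≤ ‖l‖ := Complex.re_le_norm l
        _ ≤ ‖T‖ * ‖(1 : F →L[ℂ] F)‖ := spectrum.norm_le_norm_mul_of_mem hl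
        _ ≤ ‖T‖ * 1 := by gcongr; exact norm_id_le
        _ = ‖T‖ := mul_one _
    have hl_real : l = (l.re : ℂ) := Complex.ext rfl (by simpa using him)
    have hμ_real : ((M⁻¹ : ℝ) : ℂ) * l - 1 = ((l.re / M - 1 : ℝ) : ℂ) := by
      conv_lhs => rw [hl_real]
      push_cast
      ring
    have h₁ : m / M ≤ l.re / M := by gcongr
    have h₂ : l.re / M ≤ 1 := div_le_one_of_le₀ (by linarith) hM.le
    beta_reduce
    rw [Units.val_mk0, smul_eq_mul, hμ_real, Complex.norm_real, Real.norm_eq_abs, abs_le]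
    constructor <;> linarith
  have hρ : 1 - m / M < 1 := by linarith [div_pos hm hM]
  refine lt_of_le_of_lt (iSup₂_le fun μ hμ ↦ ?_) (ENNReal.ofReal_lt_one.mpr hρ)
  rw [← ENNReal.ofReal_coe_nnreal, coe_nnnorm]
  exact ENNReal.ofReal_le_ofReal (hbound μ hμ)

end ContinuousLinearMap

section PositiveOperators

variable {A : Type*} [NonUnitalCStarAlgebra A] [PartialOrder A]
  {F : Type*} [NormedAddCommGroup F] [NormedSpace ℂ F] [SMul Aᵐᵒᵖ F] [RightCStarModule A F]

local notation "↑ₐ" => algebraMap ℂ (F →L[ℂ] F)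

lemma inner_algebraMap_sub_apply (T : F →L[ℂ] F) (l : ℂ) (x : F) :
    inner A ((↑ₐ l - T) x) x = star l • inner A x x - inner A (T x) x := by
  rw [sub_apply, RightCStarModule.inner_sub_left, Algebra.algebraMap_eq_smul_one, smul_apply,
    one_apply_eq_self, inner_smul_left_complex]

variable [StarOrderedRing A]

lemma mul_norm_le_norm_apply_of_mul_norm_sq_le {T : F →L[ℂ] F} {d : ℝ}
    (h : ∀ x, d * ‖x‖ ^ 2 ≤ ‖inner A (T x) x‖) (x : F) : d * ‖x‖ ≤ ‖T x‖ := by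
  rcases (norm_nonneg x).eq_or_lt with hx | hx
  · rw [← hx, mul_zero]; exact norm_nonneg _
  refine le_of_mul_le_mul_right ?_ hx
  calc d * ‖x‖ * ‖x‖ = d * ‖x‖ ^ 2 := by ring
    _ ≤ ‖inner A (T x) x‖ := h x
    _ ≤ ‖T x‖ * ‖x‖ := norm_inner_le _ _

lemma IsAdjointPair.abs_im_mul_norm_sq_le {T : F →L[ℂ] F} (hT : IsAdjointPair A T T) (l : ℂ)
    (x : F) : |l.im| * ‖x‖ ^ 2 ≤ ‖inner A ((↑ₐ l - T) x) x‖ := by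
  rw [inner_algebraMap_sub_apply]
  set a := star l • inner A x x - inner A (T x) x with ha
  have hskew : star a - a = (l - star l) • inner A x x := by
    rw [ha, star_sub, star_smul, star_star, star_inner, star_inner,
      ← hT x x, sub_smul]
    abel
  have hnorm : ‖(l - star l) • inner A x x‖ = 2 * (|l.im| * ‖x‖ ^ 2) := by
    rw [norm_smul, ← norm_sq_eq A, Complex.star_def, Complex.sub_conj, norm_mul,
      Complex.norm_I, mul_one, Complex.norm_real, Real.norm_eq_abs, abs_mul, abs_two, mul_assoc]
  have := norm_sub_le (star a) a
  rw [norm_star, hskew, hnorm] at this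
  linarith

lemma sub_max_mul_norm_sq_le {T : F →L[ℂ] F} (hpos : ∀ x, 0 ≤ inner A (T x) x) {m : ℝ}
    (hlow : ∀ x, m * ‖x‖ ^ 2 ≤ ‖inner A (T x) x‖) (t : ℝ) (x : F) :
    (m - max t 0) * ‖x‖ ^ 2 ≤ ‖inner A ((↑ₐ t - T) x) x‖ := by
  rw [inner_algebraMap_sub_apply, Complex.star_def, Complex.conj_ofReal, Complex.coe_smul]
  rcases le_or_gt t 0 with ht | ht
  · rw [max_eq_right ht, sub_zero, ← norm_neg (t • _ - _), neg_sub, sub_eq_add_neg, ← neg_smul]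
    exact (hlow x).trans <| CStarAlgebra.norm_le_norm_of_nonneg_of_le (hpos x) <|
      le_add_of_nonneg_right (smul_nonneg (neg_nonneg.mpr ht) inner_self_nonneg)
  · have := norm_sub_norm_le (inner A (T x) x) (t • inner A x x)
    rw [norm_smul, Real.norm_of_nonneg ht.le, ← norm_sq_eq A, norm_sub_rev] at this
    rw [max_eq_left ht.le]
    nlinarith [hlow x]

variable [CompleteSpace F]

lemma spectrum_subset_of_mul_norm_sq_le {T : F →L[ℂ] F} (hT : IsAdjointPair A T T)
    (hpos : ∀ x, 0 ≤ inner A (T x) x) {m : ℝ} (hm : 0 < m)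
    (hlow : ∀ x, m * ‖x‖ ^ 2 ≤ ‖inner A (T x) x‖) :
    spectrum ℂ T ⊆ {l | l.im = 0 ∧ m ≤ l.re} := by
  have hreal (l) (hl : l ∈ spectrum ℂ T) : l.im = 0 :=
    ContinuousLinearMap.im_eq_zero_of_mem_spectrum
      (fun l ↦ mul_norm_le_norm_apply_of_mul_norm_sq_le (hT.abs_im_mul_norm_sq_le l)) hl
  refine fun l hl ↦ ⟨hreal l hl, ContinuousLinearMap.le_re_of_mem_spectrum hreal
    (fun t ht ↦ ⟨m - max t 0, ?_, ?_⟩) hl⟩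
  · exact sub_pos.mpr (max_lt ht hm)
  · exact mul_norm_le_norm_apply_of_mul_norm_sq_le (sub_max_mul_norm_sq_le hpos hlow t)

theorem exists_sqrt_of_mul_norm_sq_le {T : F →L[ℂ] F} (hT : IsModuleMap A T)
    (hTadj : IsAdjointPair A T T) (hpos : ∀ x, 0 ≤ inner A (T x) x) {m : ℝ} (hm : 0 < m)
    (hlow : ∀ x, m * ‖x‖ ^ 2 ≤ ‖inner A (T x) x‖) :
    ∃ q : F →L[ℂ] F, IsModuleMap A q ∧ IsAdjointPair A q q ∧ IsUnit q ∧ q * q = T := by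
  have hσ := spectrum_subset_of_mul_norm_sq_le hTadj hpos hm hlow
  set M := ‖T‖ + m
  have hM : 0 < M := by positivity
  set y := ((M⁻¹ : ℝ) : ℂ) • T - 1
  have hy : spectralRadius ℂ y < 1 :=
    ContinuousLinearMap.spectralRadius_smul_sub_one_lt_one hm hσ
  have hsum := (summable_norm_sqrtOneAdd hy).of_norm.hasSum
  have hchoose_real (n : ℕ) : star (Ring.choose (2⁻¹ : ℂ) n) = Ring.choose (2⁻¹ : ℂ) n := by
    rw [show (2⁻¹ : ℂ) = ((2⁻¹ : ℝ) : ℂ) by push_cast; rfl, ← Complex.ofReal_choose,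
      Complex.star_def, Complex.conj_ofReal]
  have hyM : IsModuleMap A y := (hT.smul _).sub IsModuleMap.one
  have hyA : IsAdjointPair A y y := by
    simpa only [Complex.star_def, Complex.conj_ofReal] using
      (hTadj.smul ((M⁻¹ : ℝ) : ℂ)).sub IsAdjointPair.one
  have hgM : IsModuleMap A (sqrtOneAdd y) :=
    IsModuleMap.hasSum hsum fun n ↦ (hyM.pow n).smul _
  have hgA : IsAdjointPair A (sqrtOneAdd y) (sqrtOneAdd y) := IsAdjointPair.hasSum hsum hsum
    fun n ↦ by simpa only [hchoose_real] using (hyA.pow n).smul (Ring.choose (2⁻¹ : ℂ) n)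
  have hqq : ((√M : ℝ) : ℂ) • sqrtOneAdd y * ((√M : ℝ) : ℂ) • sqrtOneAdd y = T := by
    rw [smul_mul_smul_comm, sqrtOneAdd_mul_self hy, ← Complex.ofReal_mul,
      Real.mul_self_sqrt hM.le, add_sub_cancel, smul_smul, ← Complex.ofReal_mul,
      mul_inv_cancel₀ hM.ne', Complex.ofReal_one, one_smul]
  have hTunit : IsUnit T :=
    (spectrum.zero_notMem_iff ℂ).mp fun h0 ↦ by linarith [(hσ h0).2, Complex.zero_re]
  refine ⟨_, hgM.smul _, ?_, (isUnit_pow_iff two_ne_zero).mp (by rwa [sq, hqq]), hqq⟩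
  simpa only [Complex.star_def, Complex.conj_ofReal] using hgA.smul ((√M : ℝ) : ℂ)

end PositiveOperators

theorem exists_adjointable_section_of_surjective {A E₁ E₂ : Type*} [NonUnitalCStarAlgebra A]
    [PartialOrder A] [StarOrderedRing A]
    [NormedAddCommGroup E₁] [NormedSpace ℂ E₁] [SMul Aᵐᵒᵖ E₁] [RightCStarModule A E₁]
    [CompleteSpace E₁]
    [NormedAddCommGroup E₂] [NormedSpace ℂ E₂] [SMul Aᵐᵒᵖ E₂] [RightCStarModule A E₂]
    [CompleteSpace E₂]
    {s : E₁ →L[ℂ] E₂} (hs : IsModuleMap A s) {s' : E₂ →L[ℂ] E₁} (hs' : IsModuleMap A s')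
    (hadj : IsAdjointPair A s s') (hsurj : Function.Surjective s) :
    ∃ ψ : E₂ →L[ℂ] E₁, IsModuleMap A ψ ∧
      (∃ ψ' : E₁ →L[ℂ] E₂, IsModuleMap A ψ' ∧ IsAdjointPair A ψ ψ') ∧
      (∀ x : E₂, s (ψ x) = x) ∧
      (∀ z : E₁, ∃ u ∈ Set.range ψ, ∃ v : E₁, z = u + v ∧
        ∀ w ∈ Set.range ψ, inner A w v = 0) ∧
      (∃ U : E₂ →L[ℂ] E₁, IsModuleMap A U ∧
        (∀ x y : E₂, inner A (U x) (U y) = inner A x y) ∧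
        Set.range U = Set.range ψ) := by
  obtain ⟨C, hC, hs'_below⟩ := hadj.exists_norm_le_mul_norm_of_surjective hsurj
  have hc_inner (x : E₂) : inner A (s.comp s' x) x = inner A (s' x) (s' x) := hadj _ _
  obtain ⟨q, hqM, hqA, hq_unit, hqq⟩ := exists_sqrt_of_mul_norm_sq_le (hs.comp hs')
    (hadj.symm.comp hadj) (fun x ↦ hc_inner x ▸ RightCStarModule.inner_self_nonneg)
    (m := C⁻¹ ^ 2) (by positivity) fun x ↦ by
      rw [hc_inner, ← norm_sq_eq A, ← mul_pow]
      gcongr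
      rw [inv_mul_le_iff₀ hC]
      exact hs'_below x
  -- `r = (s s')^(-1/2)`
  set r : E₂ →L[ℂ] E₂ := ↑hq_unit.unit⁻¹
  have hrM : IsModuleMap A r := IsModuleMap.inv _ (by rwa [hq_unit.unit_spec])
  have hrA : IsAdjointPair A r r := IsAdjointPair.inv _ _ (by rwa [hq_unit.unit_spec])
  have hcrr : s.comp s' * r * r = 1 := by
    rw [← hqq, mul_assoc q, hq_unit.mul_val_inv, mul_one, hq_unit.mul_val_inv]
  have hrcr : r * s.comp s' * r = 1 := by
    rw [← hqq, ← mul_assoc, hq_unit.val_inv_mul, one_mul, hq_unit.mul_val_inv]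
  set U := s'.comp r
  set U' := r.comp s
  have hUA : IsAdjointPair A U U' := hrA.comp hadj.symm
  have hU'U : Function.LeftInverse U' U := DFunLike.congr_fun hrcr
  have hψA : IsAdjointPair A (U.comp r) (r.comp U') := hrA.comp hUA
  have hψ'ψ (z : E₁) : r (U' (U (r (s z)))) = r (U' z) := by rw [hU'U]; rfl
  have hr_surj : Function.Surjective r :=
    Function.RightInverse.surjective (f := r) (DFunLike.congr_fun hrcr)
  refine ⟨U.comp r, (hs'.comp hrM).comp hrM, ⟨r.comp U', hrM.comp (hrM.comp hs), hψA⟩,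
    DFunLike.congr_fun hcrr, fun z ↦ ⟨_, ⟨s z, rfl⟩, _, (add_sub_cancel _ z).symm, ?_⟩,
    ⟨U, hs'.comp hrM, hUA.inner_map_map_of_leftInverse hU'U, (hr_surj.range_comp U).symm⟩⟩
  rintro _ ⟨y, rfl⟩
  rw [RightCStarModule.inner_sub_right, hψA, hψA, sub_eq_zero]
  exact congrArg _ (hψ'ψ z).symm

theorem stmt7_general {A E₀ E₁ E₂ : Type*} [NonUnitalCStarAlgebra A] [PartialOrder A]
    [StarOrderedRing A]
    [NormedAddCommGroup E₀] [NormedSpace ℂ E₀] [SMul Aᵐᵒᵖ E₀] [RightCStarModule A E₀]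
    [NormedAddCommGroup E₁] [NormedSpace ℂ E₁] [SMul Aᵐᵒᵖ E₁] [RightCStarModule A E₁]
    [CompleteSpace E₁]
    [NormedAddCommGroup E₂] [NormedSpace ℂ E₂] [SMul Aᵐᵒᵖ E₂] [RightCStarModule A E₂]
    [CompleteSpace E₂]
    (s : E₁ →L[ℂ] E₂) (hs : IsModuleMap A s)
    (s' : E₂ →L[ℂ] E₁) (hs' : IsModuleMap A s') (hadj : IsAdjointPair A s s')
    (hsurj : Function.Surjective s) :
    (∃ ψ : E₂ →L[ℂ] E₁, IsModuleMap A ψ ∧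
      (∃ ψ' : E₁ →L[ℂ] E₂, IsModuleMap A ψ' ∧ IsAdjointPair A ψ ψ') ∧
      (∀ x : E₂, s (ψ x) = x) ∧
      -- `ψ(H₂)` is an orthogonal summand of `H₁` ...
      (∀ z : E₁, ∃ u ∈ Set.range ψ, ∃ v : E₁, z = u + v ∧
        ∀ w ∈ Set.range ψ, inner A w v = 0) ∧
      -- ... unitarily equivalent to `H₂`
      (∃ U : E₂ →L[ℂ] E₁, IsModuleMap A U ∧
        (∀ x y : E₂, inner A (U x) (U y) = inner A x y) ∧
        Set.range U = Set.range ψ)) ∧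
    (∀ (φ : E₀ →L[ℂ] E₂), IsModuleMap A φ →
      (∃ φ' : E₂ →L[ℂ] E₀, IsModuleMap A φ' ∧ IsAdjointPair A φ φ') →
      ∃ χ : E₀ →L[ℂ] E₁, IsModuleMap A χ ∧
        (∃ χ' : E₁ →L[ℂ] E₀, IsModuleMap A χ' ∧ IsAdjointPair A χ χ') ∧
        s.comp χ = φ) := by
  obtain ⟨ψ, hψ, ⟨ψ', hψ', hψadj⟩, hsψ, hsummand⟩ :=
    exists_adjointable_section_of_surjective hs hs' hadj hsurj
  refine ⟨⟨ψ, hψ, ⟨ψ', hψ', hψadj⟩, hsψ, hsummand⟩, fun φ hφ ⟨φ', hφ', hφadj⟩ ↦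
    ⟨ψ.comp φ, hψ.comp hφ, ⟨φ'.comp ψ', hφ'.comp hψ', hφadj.comp hψadj⟩, ?_⟩⟩
  ext x
  exact hsψ (φ x)

/-- Part (1): a surjective adjointable module map `s : H₁ → H₂` admits an adjointable
right inverse `ψ` with `s ∘ ψ = id`; moreover `ψ(H₂)` is an orthogonal summand of `H₁`
unitarily equivalent to `H₂`.  Consequently (part (2)) every Hilbert `A`-module is
`*`-projective: any adjointable `φ : H₀ → H₂` lifts through `s` to an adjointable
`χ : H₀ → H₁` with `s ∘ χ = φ`. -/
theorem stmt7 {A E₀ E₁ E₂ : Type*} [NonUnitalCStarAlgebra A] [PartialOrder A]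
    [StarOrderedRing A]
    [NormedAddCommGroup E₀] [NormedSpace ℂ E₀] [SMul Aᵐᵒᵖ E₀] [RightCStarModule A E₀]
    [CompleteSpace E₀]
    [NormedAddCommGroup E₁] [NormedSpace ℂ E₁] [SMul Aᵐᵒᵖ E₁] [RightCStarModule A E₁]
    [CompleteSpace E₁]
    [NormedAddCommGroup E₂] [NormedSpace ℂ E₂] [SMul Aᵐᵒᵖ E₂] [RightCStarModule A E₂]
    [CompleteSpace E₂]
    (s : E₁ →L[ℂ] E₂) (hs : IsModuleMap A s)
    (s' : E₂ →L[ℂ] E₁) (hs' : IsModuleMap A s') (hadj : IsAdjointPair A s s')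
    (hsurj : Function.Surjective s) :
    (∃ ψ : E₂ →L[ℂ] E₁, IsModuleMap A ψ ∧
      (∃ ψ' : E₁ →L[ℂ] E₂, IsModuleMap A ψ' ∧ IsAdjointPair A ψ ψ') ∧
      (∀ x : E₂, s (ψ x) = x) ∧
      -- `ψ(H₂)` is an orthogonal summand of `H₁` ...
      (∀ z : E₁, ∃ u ∈ Set.range ψ, ∃ v : E₁, z = u + v ∧
        ∀ w ∈ Set.range ψ, inner A w v = 0) ∧
      -- ... unitarily equivalent to `H₂`
      (∃ U : E₂ →L[ℂ] E₁, IsModuleMap A U ∧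
        (∀ x y : E₂, inner A (U x) (U y) = inner A x y) ∧
        Set.range U = Set.range ψ)) ∧
    (∀ (φ : E₀ →L[ℂ] E₂), IsModuleMap A φ →
      (∃ φ' : E₂ →L[ℂ] E₀, IsModuleMap A φ' ∧ IsAdjointPair A φ φ') →
      ∃ χ : E₀ →L[ℂ] E₁, IsModuleMap A χ ∧
        (∃ χ' : E₁ →L[ℂ] E₀, IsModuleMap A χ' ∧ IsAdjointPair A χ χ') ∧
        s.comp χ = φ) :=
  stmt7_general s hs s' hs' hadj hsurj

end
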